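/- In the three-valued semantics over strict timed traces, metric since satisfies: m(k, φ S_{[0,n]} ψ) = max{ m(k,ψ), min{ m(k,φ), max over x ∈ [1,n] of m(k, ●_{[x,x]}(φ S_{[0,n−x]} ψ)) } } for all k < λ and n ≥ 0. -/
import Mathlib


open scoped Classical ENat

/-- Interval `[a, b]` with `a : ℕ` and `b : ℕ∞` (possibly `ω = ⊤`). -/
abbrev Ivl : Type := ℕ × ℕ∞

/-- Membership `x ∈ [a, b]`. -/
def memI (I : Ivl) (x : ℕ) : Prop := I.1 ≤ x ∧ (x : ℕ∞) ≤ I.2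

/-- Metric temporal formulas over alphabet `A`.  Non-metric operators are the
metric ones with interval `(0, ⊤)`, i.e. `[0, ω]`. -/
inductive MF (A : Type) : Type
  | bot
  | atom (a : A)
  | and (φ ψ : MF A)
  | or (φ ψ : MF A)
  | imp (φ ψ : MF A)
  | prev (I : Ivl) (φ : MF A)      -- ●_I
  | wprev (I : Ivl) (φ : MF A)     -- ●̂_I (weak previous)
  | next (I : Ivl) (φ : MF A)      -- ○_I
  | wnext (I : Ivl) (φ : MF A)     -- ◯̂_I (weak next)
  | since (I : Ivl) (φ ψ : MF A)   -- φ S_I ψ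
  | trigger (I : Ivl) (φ ψ : MF A) -- φ T_I ψ
  | until_ (I : Ivl) (φ ψ : MF A)  -- φ U_I ψ
  | release (I : Ivl) (φ ψ : MF A) -- φ R_I ψ

namespace MF
def top {A : Type} : MF A := imp bot bot
def neg {A : Type} (φ : MF A) : MF A := imp φ bot
/-- `□ φ := ⊥ R_{[0,ω]} φ`. -/
def always {A : Type} (φ : MF A) : MF A := release (0, ⊤) bot φ
/-- `◇ φ := ⊤ U_{[0,ω]} φ`. -/
def evtl {A : Type} (φ : MF A) : MF A := until_ (0, ⊤) top φ
/-- `F := ¬ ○_{[0,ω]} ⊤` (final). -/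
def final {A : Type} : MF A := neg (next (0, ⊤) top)
/-- `I := ¬ ●_{[0,ω]} ⊤` (initial). -/
def initial {A : Type} : MF A := neg (prev (0, ⊤) top)
end MF

/-- Timed HT-trace of length `lam ∈ ℕ ∪ {ω}` over alphabet `A`. -/
structure TimedTrace (A : Type) where
  lam : ℕ∞
  H : ℕ → Set A
  T : ℕ → Set A
  tau : ℕ → ℕ
  sub : ∀ i : ℕ, (i : ℕ∞) < lam → H i ⊆ T i
  mono : ∀ i : ℕ, ((i + 1 : ℕ) : ℕ∞) < lam → tau i ≤ tau (i + 1)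
  zero : tau 0 = 0

/-- Strictness: `τ(i) < τ(i+1)` for all consecutive indices in the domain. -/
def TimedTrace.strict {A : Type} (M : TimedTrace A) : Prop :=
  ∀ i : ℕ, ((i + 1 : ℕ) : ℕ∞) < M.lam → M.tau i < M.tau (i + 1)

/-- The total trace `(T, T)` associated with `(H, T)`. -/
def TimedTrace.tot {A : Type} (M : TimedTrace A) : TimedTrace A :=
  { M with H := M.T, sub := fun _ _ => subset_rfl }

/-- MHT satisfaction `M, k ⊨ φ`. -/
def sat {A : Type} : TimedTrace A → ℕ → MF A → Prop
  | _, _, .bot => False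
  | M, k, .atom a => a ∈ M.H k
  | M, k, .and φ ψ => sat M k φ ∧ sat M k ψ
  | M, k, .or φ ψ => sat M k φ ∨ sat M k ψ
  | M, k, .imp φ ψ =>
      (sat M k φ → sat M k ψ) ∧ (sat M.tot k φ → sat M.tot k ψ)
  | M, k, .prev I φ =>
      0 < k ∧ sat M (k - 1) φ ∧ memI I (M.tau k - M.tau (k - 1))
  | M, k, .wprev I φ =>
      k = 0 ∨ sat M (k - 1) φ ∨ ¬ memI I (M.tau k - M.tau (k - 1))
  | M, k, .next I φ =>
      ((k + 1 : ℕ) : ℕ∞) < M.lam ∧ sat M (k + 1) φ ∧ memI I (M.tau (k + 1) - M.tau k)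
  | M, k, .wnext I φ =>
      ((k + 1 : ℕ) : ℕ∞) = M.lam ∨ sat M (k + 1) φ ∨ ¬ memI I (M.tau (k + 1) - M.tau k)
  | M, k, .since I φ ψ =>
      ∃ j : ℕ, j ≤ k ∧ memI I (M.tau k - M.tau j) ∧ sat M j ψ ∧
        ∀ i : ℕ, j < i → i ≤ k → sat M i φ
  | M, k, .trigger I φ ψ =>
      ∀ j : ℕ, j ≤ k → memI I (M.tau k - M.tau j) →
        sat M j ψ ∨ ∃ i : ℕ, j < i ∧ i ≤ k ∧ sat M i φ
  | M, k, .until_ I φ ψ =>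
      ∃ j : ℕ, k ≤ j ∧ ((j : ℕ) : ℕ∞) < M.lam ∧ memI I (M.tau j - M.tau k) ∧ sat M j ψ ∧
        ∀ i : ℕ, k ≤ i → i < j → sat M i φ
  | M, k, .release I φ ψ =>
      ∀ j : ℕ, k ≤ j → ((j : ℕ) : ℕ∞) < M.lam → memI I (M.tau j - M.tau k) →
        sat M j ψ ∨ ∃ i : ℕ, k ≤ i ∧ i < j ∧ sat M i φ

/-- The three-valued (Gödel) valuation associated with a timed HT-trace:
`0` (false), `1` (true there only), `2` (true here).  `sSup ∅ = 0` in `ℕ`, and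
the `insert 2` realizes `inf ∅ = 2` (all values are `≤ 2`). -/
noncomputable def mval {A : Type} (M : TimedTrace A) : MF A → ℕ → ℕ
  | .bot, _ => 0
  | .atom a, k => if a ∈ M.H k then 2 else if a ∈ M.T k then 1 else 0
  | .and φ ψ, k => min (mval M φ k) (mval M ψ k)
  | .or φ ψ, k => max (mval M φ k) (mval M ψ k)
  | .imp φ ψ, k => if mval M φ k ≤ mval M ψ k then 2 else mval M ψ k
  | .prev I φ, k =>
      if 0 < k ∧ memI I (M.tau k - M.tau (k - 1)) then mval M φ (k - 1) else 0
  | .wprev I φ, k =>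
      if k = 0 ∨ ¬ memI I (M.tau k - M.tau (k - 1)) then 2 else mval M φ (k - 1)
  | .next I φ, k =>
      if ((k + 1 : ℕ) : ℕ∞) < M.lam ∧ memI I (M.tau (k + 1) - M.tau k) then
        mval M φ (k + 1) else 0
  | .wnext I φ, k =>
      if ((k + 1 : ℕ) : ℕ∞) = M.lam ∨ ¬ memI I (M.tau (k + 1) - M.tau k) then 2
      else mval M φ (k + 1)
  | .since I φ ψ, k =>
      sSup {v : ℕ | ∃ j : ℕ, j ≤ k ∧ memI I (M.tau k - M.tau j) ∧
        v = min (mval M ψ j)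
          (sInf (insert 2 {w : ℕ | ∃ i : ℕ, j < i ∧ i ≤ k ∧ w = mval M φ i}))}
  | .trigger I φ ψ, k =>
      sInf (insert 2 {v : ℕ | ∃ j : ℕ, j ≤ k ∧ memI I (M.tau k - M.tau j) ∧
        v = max (mval M ψ j)
          (sSup {w : ℕ | ∃ i : ℕ, j < i ∧ i ≤ k ∧ w = mval M φ i})})
  | .until_ I φ ψ, k =>
      sSup {v : ℕ | ∃ j : ℕ, k ≤ j ∧ ((j : ℕ) : ℕ∞) < M.lam ∧
        memI I (M.tau j - M.tau k) ∧
        v = min (mval M ψ j)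
          (sInf (insert 2 {w : ℕ | ∃ i : ℕ, k ≤ i ∧ i < j ∧ w = mval M φ i}))}
  | .release I φ ψ, k =>
      sInf (insert 2 {v : ℕ | ∃ j : ℕ, k ≤ j ∧ ((j : ℕ) : ℕ∞) < M.lam ∧
        memI I (M.tau j - M.tau k) ∧
        v = max (mval M ψ j)
          (sSup {w : ℕ | ∃ i : ℕ, k ≤ i ∧ i < j ∧ w = mval M φ i})})

section Helpers
variable {A : Type}

lemma nat_sSup_le {s : Set ℕ} {m : ℕ} (h : ∀ v ∈ s, v ≤ m) : sSup s ≤ m := by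
  rcases s.eq_empty_or_nonempty with rfl | hne
  · simp
  · exact csSup_le hne h

lemma mval_le_two (M : TimedTrace A) (φ : MF A) (k : ℕ) : mval M φ k ≤ 2 := by
  induction φ generalizing k with
  | bot => simp [mval]
  | atom a => simp only [mval]; split_ifs <;> omega
  | and φ ψ ih1 ih2 => simp only [mval]; exact le_trans (min_le_left _ _) (ih1 k)
  | or φ ψ ih1 ih2 => simp only [mval]; exact max_le (ih1 k) (ih2 k)
  | imp φ ψ ih1 ih2 => simp only [mval]; split_ifs <;> simp [ih2 k]
  | prev I φ ih => simp only [mval]; split_ifs <;> simp [ih]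
  | wprev I φ ih => simp only [mval]; split_ifs <;> simp [ih]
  | next I φ ih => simp only [mval]; split_ifs <;> simp [ih]
  | wnext I φ ih => simp only [mval]; split_ifs <;> simp [ih]
  | since I φ ψ ih1 ih2 =>
      simp only [mval]
      refine nat_sSup_le ?_
      rintro v ⟨j, -, -, rfl⟩
      exact le_trans (min_le_left _ _) (ih2 j)
  | trigger I φ ψ ih1 ih2 => simp only [mval]; exact Nat.sInf_le (Set.mem_insert _ _)
  | until_ I φ ψ ih1 ih2 =>
      simp only [mval]
      refine nat_sSup_le ?_
      rintro v ⟨j, -, -, -, rfl⟩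
      exact le_trans (min_le_left _ _) (ih2 j)
  | release I φ ψ ih1 ih2 => simp only [mval]; exact Nat.sInf_le (Set.mem_insert _ _)

lemma tau_mono (M : TimedTrace A) {i j : ℕ} (hij : i ≤ j) (hj : (j : ℕ∞) < M.lam) :
    M.tau i ≤ M.tau j := by
  induction j with
  | zero => have : i = 0 := Nat.le_zero.mp hij; simp [this]
  | succ m ih =>
      rcases Nat.lt_or_ge i (m+1) with h | h
      · have hm : (m : ℕ∞) < M.lam := lt_of_le_of_lt (by exact_mod_cast Nat.le_succ m) hj
        exact le_trans (ih (by omega) hm) (M.mono m hj)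
      · have : i = m + 1 := by omega
        simp [this]

end Helpers
/-- Auxiliary: the inner set in the `since` valuation. -/
def Pset {A : Type} (M : TimedTrace A) (φ : MF A) (j m : ℕ) : Set ℕ :=
  {w : ℕ | ∃ i : ℕ, j < i ∧ i ≤ m ∧ w = mval M φ i}

/-- Auxiliary: the outer set in the `since` valuation for interval `[0,nn]`. -/
noncomputable def Sset {A : Type} (M : TimedTrace A) (φ ψ : MF A) (nn m : ℕ) : Set ℕ :=
  {v : ℕ | ∃ j : ℕ, j ≤ m ∧ memI (0, (nn : ℕ∞)) (M.tau m - M.tau j) ∧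
    v = min (mval M ψ j) (sInf (insert 2 (Pset M φ j m)))}

lemma mval_since_eq {A : Type} (M : TimedTrace A) (φ ψ : MF A) (nn m : ℕ) :
    mval M (MF.since (0, (nn : ℕ∞)) φ ψ) m = sSup (Sset M φ ψ nn m) := rfl

lemma mval_prev_eq {A : Type} (M : TimedTrace A) (φ' : MF A) (x k : ℕ) :
    mval M (MF.prev (x, (x : ℕ∞)) φ') k =
      if 0 < k ∧ memI (x, (x : ℕ∞)) (M.tau k - M.tau (k - 1)) then mval M φ' (k - 1)
      else 0 := rfl

lemma memI_zero_iff {n d : ℕ} : memI (0, (n : ℕ∞)) d ↔ d ≤ n := by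
  simp [memI, Nat.cast_le]

lemma memI_pt_iff {x d : ℕ} : memI (x, (x : ℕ∞)) d ↔ d = x := by
  simp only [memI, Nat.cast_le]
  omega

lemma Sset_le_two {A : Type} (M : TimedTrace A) (φ ψ : MF A) (nn m : ℕ) :
    ∀ v ∈ Sset M φ ψ nn m, v ≤ 2 := by
  rintro v ⟨j, -, -, rfl⟩
  exact le_trans (min_le_left _ _) (mval_le_two M ψ j)

lemma Sset_bdd {A : Type} (M : TimedTrace A) (φ ψ : MF A) (nn m : ℕ) :
    BddAbove (Sset M φ ψ nn m) := ⟨2, fun v hv => Sset_le_two M φ ψ nn m v hv⟩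

lemma mval_psi_mem_Sset {A : Type} (M : TimedTrace A) (φ ψ : MF A) (nn m : ℕ) :
    mval M ψ m ∈ Sset M φ ψ nn m := by
  refine ⟨m, le_refl m, ⟨Nat.zero_le _, by simp⟩, ?_⟩
  have hPe : Pset M φ m m = ∅ := by
    ext w
    simp only [Pset, Set.mem_setOf_eq, Set.mem_empty_iff_false, iff_false, not_exists]
    rintro i ⟨h1, h2, -⟩
    omega
  rw [hPe]
  have : (insert 2 (∅ : Set ℕ)) = {2} := by simp
  rw [this, csInf_singleton]
  exact (min_eq_left (mval_le_two M ψ m)).symm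
/-- three-valued recursive identity for metric since over strict
traces. -/
theorem mval_since_unfolding {A : Type} (M : TimedTrace A) (hstrict : M.strict)
    (k : ℕ) (hk : (k : ℕ∞) < M.lam) (n : ℕ) (φ ψ : MF A) :
    mval M (MF.since (0, (n : ℕ∞)) φ ψ) k =
      max (mval M ψ k) (min (mval M φ k)
        (sSup ((fun x : ℕ =>
          mval M (MF.prev (x, (x : ℕ∞)) (MF.since (0, ((n - x : ℕ) : ℕ∞)) φ ψ)) k) ''
            Set.Icc 1 n))) := by
  classical
  set f : ℕ → ℕ := fun x : ℕ =>
    mval M (MF.prev (x, (x : ℕ∞)) (MF.since (0, ((n - x : ℕ) : ℕ∞)) φ ψ)) k with hf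
  set img : Set ℕ := f '' Set.Icc 1 n with himgdef
  have hbimg : BddAbove img := by
    refine ⟨2, ?_⟩
    rintro v ⟨x, -, rfl⟩
    exact mval_le_two M _ k
  have hk1lam : ((k - 1 : ℕ) : ℕ∞) < M.lam :=
    lt_of_le_of_lt (by exact_mod_cast Nat.sub_le k 1) hk
  rw [mval_since_eq]
  apply le_antisymm
  · -- sSup (Sset n k) ≤ RHS
    refine csSup_le ⟨_, mval_psi_mem_Sset M φ ψ n k⟩ ?_
    rintro v ⟨j, hj, hmem, rfl⟩
    rcases eq_or_lt_of_le hj with rfl | hjk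
    · exact le_trans (min_le_left _ _) (le_max_left _ _)
    · have hk0 : 0 < k := by omega
      have hτj : M.tau j ≤ M.tau (k - 1) := tau_mono M (by omega) hk1lam
      have hτk1 : M.tau (k - 1) < M.tau k := by
        have h := hstrict (k - 1) (by rw [Nat.sub_add_cancel hk0]; exact hk)
        rwa [Nat.sub_add_cancel hk0] at h
      have hdn : M.tau k - M.tau j ≤ n := memI_zero_iff.mp hmem
      set x := M.tau k - M.tau (k - 1) with hx
      have hx1 : 1 ≤ x := by omega
      have hxn : x ≤ n := by omega
      have hmem' : memI (0, ((n - x : ℕ) : ℕ∞)) (M.tau (k - 1) - M.tau j) :=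
        memI_zero_iff.mpr (by omega)
      have he' : min (mval M ψ j) (sInf (insert 2 (Pset M φ j (k - 1))))
          ∈ Sset M φ ψ (n - x) (k - 1) := ⟨j, by omega, hmem', rfl⟩
      have h1 : sInf (insert 2 (Pset M φ j k)) ≤ sInf (insert 2 (Pset M φ j (k - 1))) := by
        refine csInf_le_csInf (OrderBot.bddBelow _) ⟨2, Set.mem_insert _ _⟩ ?_
        rintro w hw
        rcases Set.mem_insert_iff.mp hw with rfl | ⟨i, h1, h2, rfl⟩
        · exact Set.mem_insert _ _
        · exact Set.mem_insert_of_mem _ ⟨i, h1, by omega, rfl⟩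
      have h2 : min (mval M ψ j) (sInf (insert 2 (Pset M φ j k)))
          ≤ sSup (Sset M φ ψ (n - x) (k - 1)) :=
        le_trans (min_le_min (le_refl _) h1) (le_csSup (Sset_bdd M φ ψ _ _) he')
      have h3 : min (mval M ψ j) (sInf (insert 2 (Pset M φ j k))) ≤ mval M φ k :=
        le_trans (min_le_right _ _)
          (Nat.sInf_le (Set.mem_insert_of_mem _ ⟨k, hjk, le_refl k, rfl⟩))
      have himg : sSup (Sset M φ ψ (n - x) (k - 1)) ∈ img := by
        refine ⟨x, ⟨hx1, hxn⟩, ?_⟩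
        rw [hf]
        beta_reduce
        rw [mval_prev_eq, if_pos ⟨hk0, memI_pt_iff.mpr rfl⟩, mval_since_eq]
      exact le_max_of_le_right (le_min h3 (le_trans h2 (le_csSup hbimg himg)))
  · -- RHS ≤ sSup (Sset n k)
    apply max_le
    · exact le_csSup (Sset_bdd M φ ψ n k) (mval_psi_mem_Sset M φ ψ n k)
    · rcases img.eq_empty_or_nonempty with he | hne
      · rw [he]
        simp
      · have ht := Nat.sSup_mem hne hbimg
        rcases ht with ⟨x, ⟨hx1, hxn⟩, hxeq⟩
        rw [hf] at hxeq
        beta_reduce at hxeq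
        rw [mval_prev_eq] at hxeq
        by_cases hc : 0 < k ∧ memI (x, (x : ℕ∞)) (M.tau k - M.tau (k - 1))
        · rw [if_pos hc, mval_since_eq] at hxeq
          obtain ⟨hk0, hmx⟩ := hc
          have hxval : M.tau k - M.tau (k - 1) = x := memI_pt_iff.mp hmx
          rcases (Sset M φ ψ (n - x) (k - 1)).eq_empty_or_nonempty with h0 | hne'
          · rw [h0] at hxeq
            rw [← hxeq]
            simp
          · have ht' := Nat.sSup_mem hne' (Sset_bdd M φ ψ _ _)
            rcases ht' with ⟨j, hj, hmem', heq'⟩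
            have hjk : j < k := by omega
            have hτj : M.tau j ≤ M.tau (k - 1) := tau_mono M hj hk1lam
            have hτk1 : M.tau (k - 1) < M.tau k := by
              have h := hstrict (k - 1) (by rw [Nat.sub_add_cancel hk0]; exact hk)
              rwa [Nat.sub_add_cancel hk0] at h
            have hd' : M.tau (k - 1) - M.tau j ≤ n - x := memI_zero_iff.mp hmem'
            have hmemS : memI (0, (n : ℕ∞)) (M.tau k - M.tau j) :=
              memI_zero_iff.mpr (by omega)
            have heS : min (mval M ψ j) (sInf (insert 2 (Pset M φ j k)))
                ∈ Sset M φ ψ n k := ⟨j, by omega, hmemS, rfl⟩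
            refine le_trans ?_ (le_csSup (Sset_bdd M φ ψ n k) heS)
            rw [← hxeq, heq']
            refine le_min (le_trans (min_le_right _ _) (min_le_left _ _)) ?_
            refine le_csInf ⟨2, Set.mem_insert _ _⟩ ?_
            rintro w hw
            rcases Set.mem_insert_iff.mp hw with rfl | ⟨i, hji, hik, rfl⟩
            · exact le_trans (min_le_right _ _)
                (le_trans (min_le_right _ _) (Nat.sInf_le (Set.mem_insert _ _)))
            · rcases eq_or_lt_of_le hik with rfl | hik'
              · exact min_le_left _ _
              · exact le_trans (min_le_right _ _)
                  (le_trans (min_le_right _ _)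
                    (Nat.sInf_le (Set.mem_insert_of_mem _ ⟨i, hji, by omega, rfl⟩)))
        · rw [if_neg hc] at hxeq
          rw [← hxeq]
          simp
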